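/- For every positive integer N, the Gauss sum S(N) = \sum_{k=0}^{2N-1} \exp(-\pi i k^2/(2N)) equals (1-i)\sqrt{N}. -/

import Mathlib

open Real Complex Filter Topology

lemma re_cpow_half_nonneg (z : ℂ) : 0 ≤ (z ^ (1/2 : ℂ)).re := by
  by_cases hz : z = 0
  · simp [hz, Complex.zero_cpow (by norm_num : (1/2 : ℂ) ≠ 0)]
  · rw [Complex.cpow_def_of_ne_zero hz, Complex.exp_re]
    refine mul_nonneg (Real.exp_pos _).le (Real.cos_nonneg_of_mem_Icc ?_)
    have h1 := Complex.neg_pi_lt_arg z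
    have h2 := Complex.arg_le_pi z
    constructor <;> simp [Complex.mul_im, Complex.log_im] <;> linarith

lemma sq_cpow_half {z : ℂ} (hz : z ≠ 0) : (z ^ (1/2 : ℂ)) ^ 2 = z := by
  rw [sq, ← Complex.cpow_add _ _ hz]
  norm_num

lemma cpow_half_eq {z w : ℂ} (hw : w ^ 2 = z) (hre : 0 < w.re) : z ^ (1/2 : ℂ) = w := by
  have hwne : w ≠ 0 := fun h => by simp [h] at hre
  have hz : z ≠ 0 := by rw [← hw]; exact pow_ne_zero _ hwne
  have h2 : (z ^ (1/2 : ℂ)) ^ 2 = z := sq_cpow_half hz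
  have hfac : (z ^ (1/2 : ℂ) - w) * (z ^ (1/2 : ℂ) + w) = 0 := by
    linear_combination h2 - hw
  rcases mul_eq_zero.mp hfac with h | h
  · exact sub_eq_zero.mp h
  · exfalso
    have h0 := re_cpow_half_nonneg z
    have hx : z ^ (1/2 : ℂ) = -w := eq_neg_of_add_eq_zero_left h
    rw [hx] at h0
    simp only [Complex.neg_re] at h0
    linarith

lemma cpow_half_mul {a c : ℂ} (ha : 0 < a.re) (hc : 0 < c.re) :
    (a * c) ^ (1/2 : ℂ) = a ^ (1/2 : ℂ) * c ^ (1/2 : ℂ) := by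
  have ha' : a ≠ 0 := fun h => by simp [h] at ha
  have hc' : c ≠ 0 := fun h => by simp [h] at hc
  refine cpow_half_eq ?_ ?_
  · rw [mul_pow, sq_cpow_half ha', sq_cpow_half hc']
  · rw [Complex.cpow_def_of_ne_zero ha', Complex.cpow_def_of_ne_zero hc',
      ← Complex.exp_add, Complex.exp_re]
    refine mul_pos (Real.exp_pos _) (Real.cos_pos_of_mem_Ioo ?_)
    have h1 : |Complex.arg a| < π / 2 := Complex.abs_arg_lt_pi_div_two_iff.mpr (Or.inl ha)
    have h2 : |Complex.arg c| < π / 2 := Complex.abs_arg_lt_pi_div_two_iff.mpr (Or.inl hc)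
    rw [abs_lt] at h1 h2
    constructor <;> simp [Complex.add_im, Complex.mul_im, Complex.log_im] <;> linarith

lemma summable_gauss {t : ℝ} (ht : 0 < t) :
    Summable (fun n : ℤ => rexp (-π * t * (n : ℝ) ^ 2)) := by
  have hlt : rexp (-π * t) < 1 := by
    rw [Real.exp_lt_one_iff]
    nlinarith [Real.pi_pos]
  have key : ∀ n : ℕ, rexp (-π * t * (n : ℝ) ^ 2) ≤ rexp (-π * t) ^ n := by
    intro n
    rw [← Real.exp_nat_mul]
    apply Real.exp_le_exp.mpr
    have hn : (n : ℝ) ≤ (n : ℝ) ^ 2 := by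
      exact_mod_cast Nat.le_self_pow two_ne_zero n
    nlinarith [mul_pos Real.pi_pos ht]
  have hgeo : Summable (fun n : ℕ => rexp (-π * t) ^ n) :=
    summable_geometric_of_lt_one (Real.exp_pos _).le hlt
  apply Summable.of_nat_of_neg
  · exact Summable.of_nonneg_of_le (fun n => (Real.exp_pos _).le) key hgeo
  · refine Summable.of_nonneg_of_le (fun n => (Real.exp_pos _).le) (fun n => ?_) hgeo
    simpa using key n

noncomputable def tailC : ℝ := ∑' n : ℤ, rexp (-π * ((n : ℝ) ^ 2 - 1))

lemma tail_bound {t : ℝ} (ht : 1 ≤ t) {g : ℤ → ℂ} (hg0 : g 0 = 1)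
    (hg : ∀ n : ℤ, ‖g n‖ ≤ rexp (-π * t * (n : ℝ) ^ 2)) :
    ‖(∑' n : ℤ, g n) - 1‖ ≤ tailC * rexp (-π * t) := by
  have hsumg : Summable g :=
    Summable.of_norm_bounded (summable_gauss (by linarith)) hg
  have hC : Summable (fun n : ℤ => rexp (-π * ((n : ℝ) ^ 2 - 1))) := by
    have := (summable_gauss (t := 1) one_pos).mul_left (rexp π)
    refine this.congr fun n => ?_
    rw [← Real.exp_add]
    ring_nf
  have hsplit : ∑' n : ℤ, g n = g 0 + ∑' n : ℤ, if n = 0 then 0 else g n :=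
    Summable.tsum_eq_add_tsum_ite hsumg 0
  rw [hsplit, hg0, add_sub_cancel_left]
  have hb : ∀ n : ℤ, ‖if n = 0 then 0 else g n‖ ≤
      rexp (-π * ((n : ℝ) ^ 2 - 1)) * rexp (-π * t) := by
    intro n
    by_cases hn : n = 0
    · rw [hn, if_pos rfl, norm_zero]
      exact mul_nonneg (Real.exp_pos _).le (Real.exp_pos _).le
    · simp only [if_neg hn]
      refine (hg n).trans ?_
      rw [← Real.exp_add]
      apply Real.exp_le_exp.mpr
      have hn2 : 1 ≤ (n : ℝ) ^ 2 := by
        have : 1 ≤ |n| := Int.one_le_abs hn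
        have : (1 : ℝ) ≤ |(n : ℝ)| := by exact_mod_cast this
        rw [← _root_.sq_abs]
        nlinarith [abs_nonneg ((n:ℝ))]
      nlinarith [Real.pi_pos, mul_nonneg (mul_nonneg Real.pi_pos.le (by linarith : (0:ℝ) ≤ t - 1)) (by linarith : (0:ℝ) ≤ (n:ℝ)^2 - 1)]
  refine le_of_le_of_eq (tsum_of_norm_bounded ((hC.mul_right (rexp (-π * t))).hasSum) hb) ?_
  rw [tsum_mul_right]
  rfl

def modEquiv (m : ℕ) (hm : 0 < m) : Fin m × ℤ ≃ ℤ where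
  toFun p := (m : ℤ) * p.2 + (p.1 : ℤ)
  invFun n := (⟨(n % (m : ℤ)).toNat, by
      have h1 : 0 ≤ n % (m : ℤ) := Int.emod_nonneg n (by exact_mod_cast hm.ne')
      have h2 : n % (m : ℤ) < m := Int.emod_lt_of_pos n (by exact_mod_cast hm)
      omega⟩, n / (m : ℤ))
  left_inv p := by
    have h0 : (0:ℤ) ≤ (p.1 : ℤ) := Int.natCast_nonneg _
    have h1 : ((p.1 : ℤ)) < m := by exact_mod_cast p.1.2
    ext
    · simp only [add_comm ((m:ℤ) * p.2) ((p.1 : ℤ)), Int.add_mul_emod_self_left]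
      rw [Int.emod_eq_of_lt h0 h1]
      omega
    · simp only [add_comm ((m:ℤ) * p.2) ((p.1 : ℤ)),
        Int.add_mul_ediv_left _ _ (by exact_mod_cast hm.ne' : (m:ℤ) ≠ 0)]
      rw [Int.ediv_eq_zero_of_lt h0 h1]
      omega
  right_inv n := by
    simp only
    have h1 : 0 ≤ n % (m : ℤ) := Int.emod_nonneg n (by exact_mod_cast hm.ne')
    rw [Int.toNat_of_nonneg h1]
    exact Int.mul_ediv_add_emod n m

lemma norm_cexp_re (x y : ℝ) : ‖cexp ((x:ℂ) + (y:ℂ) * I)‖ = rexp x := by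
  rw [Complex.norm_exp]
  simp

noncomputable def gD (N r : ℕ) (ε : ℝ) (n : ℤ) : ℂ :=
  cexp (((-π*ε*(r:ℝ)^2 : ℝ) : ℂ) + -(π:ℂ) / ((16*(N:ℝ)^2*ε : ℝ) : ℂ) *
    ((n:ℂ) + I * ((-4*(N:ℝ)*ε*(r:ℝ) : ℝ) : ℂ)) ^ 2)

noncomputable def Df (N r : ℕ) (ε : ℝ) : ℂ := ∑' n : ℤ, gD N r ε n

def xval (N r : ℕ) (q : ℤ) : ℤ := 4*(N:ℤ)*q + (r:ℤ)

lemma gD_exponent (N r : ℕ) (hN : 0 < N) {ε : ℝ} (hε : 0 < ε) (n : ℤ) :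
    ((-π*ε*(r:ℝ)^2 : ℝ) : ℂ) + -(π:ℂ) / ((16*(N:ℝ)^2*ε : ℝ) : ℂ) *
      ((n:ℂ) + I * ((-4*(N:ℝ)*ε*(r:ℝ) : ℝ) : ℂ)) ^ 2
    = ((-π * (16*(N:ℝ)^2*ε)⁻¹ * (n:ℝ)^2 : ℝ) : ℂ)
      + ((π*(n:ℝ)*(r:ℝ)/(2*(N:ℝ)) : ℝ) : ℂ) * I := by
  have hN' : ((N:ℕ):ℂ) ≠ 0 := Nat.cast_ne_zero.mpr hN.ne'
  have hε' : ((ε:ℝ):ℂ) ≠ 0 := Complex.ofReal_ne_zero.mpr hε.ne'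
  have hIb : ((n:ℂ) + I * ((-4*(N:ℝ)*ε*(r:ℝ) : ℝ) : ℂ)) ^ 2
      = ((n:ℂ)^2 - (((-4*(N:ℝ)*ε*(r:ℝ) : ℝ) : ℂ))^2)
        + 2*(n:ℂ)*(((-4*(N:ℝ)*ε*(r:ℝ) : ℝ) : ℂ))*I := by
    linear_combination (((-4*(N:ℝ)*ε*(r:ℝ) : ℝ) : ℂ))^2 * Complex.I_sq
  rw [hIb]
  push_cast
  field_simp [hN', hε']
  ring

lemma gD_norm (N r : ℕ) (hN : 0 < N) {ε : ℝ} (hε : 0 < ε) (n : ℤ) :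
    ‖gD N r ε n‖ ≤ rexp (-π * (16*(N:ℝ)^2*ε)⁻¹ * (n:ℝ)^2) := by
  rw [gD, gD_exponent N r hN hε n, norm_cexp_re]

lemma gD_zero (N r : ℕ) (hN : 0 < N) {ε : ℝ} (hε : 0 < ε) : gD N r ε 0 = 1 := by
  rw [gD, gD_exponent N r hN hε 0]
  norm_num

lemma stepB (N r : ℕ) (hN : 0 < N) {ε : ℝ} (hε : 0 < ε) :
    ∑' q : ℤ, cexp (-(π:ℂ) * (ε:ℂ) * ((xval N r q : ℤ) : ℂ)^2)
      = ((4*(N:ℝ)*Real.sqrt ε : ℝ) : ℂ)⁻¹ * Df N r ε := by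
  have hNR : (0:ℝ) < N := Nat.cast_pos.mpr hN
  have ha : (0:ℝ) < 16*(N:ℝ)^2*ε :=
    mul_pos (mul_pos (by norm_num) (pow_pos hNR 2)) hε
  have key := Complex.tsum_exp_neg_quadratic (a := ((16*(N:ℝ)^2*ε : ℝ) : ℂ))
    (by rw [Complex.ofReal_re]; exact ha) (((-4*(N:ℝ)*ε*(r:ℝ) : ℝ)) : ℂ)
  have hsqrt : ((16*(N:ℝ)^2*ε : ℝ) : ℂ) ^ (1/2 : ℂ) = ((4*(N:ℝ)*Real.sqrt ε : ℝ) : ℂ) := by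
    refine cpow_half_eq ?_ ?_
    · rw [← Complex.ofReal_pow]
      have h4 : (4*(N:ℝ)*Real.sqrt ε)^2 = 16*(N:ℝ)^2*ε := by
        rw [mul_pow, mul_pow, Real.sq_sqrt hε.le]; ring
      rw [h4]
    · rw [Complex.ofReal_re]
      have := Real.sqrt_pos.mpr hε
      nlinarith
  calc ∑' q : ℤ, cexp (-(π:ℂ) * (ε:ℂ) * ((xval N r q : ℤ) : ℂ)^2)
      = ∑' q : ℤ, cexp (((-π*ε*(r:ℝ)^2 : ℝ) : ℂ)) *
          cexp (-(π:ℂ) * ((16*(N:ℝ)^2*ε : ℝ) : ℂ) * (q:ℂ)^2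
            + 2*(π:ℂ)*(((-4*(N:ℝ)*ε*(r:ℝ) : ℝ)) : ℂ)*(q:ℂ)) := by
        refine tsum_congr fun q => ?_
        rw [← Complex.exp_add]
        congr 1
        rw [xval]
        push_cast
        ring
    _ = cexp (((-π*ε*(r:ℝ)^2 : ℝ) : ℂ)) * ∑' q : ℤ,
          cexp (-(π:ℂ) * ((16*(N:ℝ)^2*ε : ℝ) : ℂ) * (q:ℂ)^2
            + 2*(π:ℂ)*(((-4*(N:ℝ)*ε*(r:ℝ) : ℝ)) : ℂ)*(q:ℂ)) := tsum_mul_left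
    _ = cexp (((-π*ε*(r:ℝ)^2 : ℝ) : ℂ)) * (1 / ((16*(N:ℝ)^2*ε : ℝ) : ℂ) ^ (1/2:ℂ) *
          ∑' n : ℤ, cexp (-(π:ℂ) / ((16*(N:ℝ)^2*ε : ℝ) : ℂ) *
            ((n:ℂ) + I * (((-4*(N:ℝ)*ε*(r:ℝ) : ℝ)) : ℂ)) ^ 2)) := by rw [key]
    _ = ((4*(N:ℝ)*Real.sqrt ε : ℝ) : ℂ)⁻¹ * Df N r ε := by
        rw [hsqrt, Df]
        simp_rw [gD, Complex.exp_add]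
        rw [tsum_mul_left]
        ring

lemma tendsto_aux (c : ℝ) (hc : 0 < c) :
    Tendsto (fun ε : ℝ => tailC * rexp (-π * (c*ε)⁻¹)) (𝓝[>] (0:ℝ)) (𝓝 0) := by
  have h1 : Tendsto (fun ε : ℝ => c * ε) (𝓝[>] (0:ℝ)) (𝓝[>] (0:ℝ)) := by
    refine tendsto_nhdsWithin_iff.mpr ⟨?_, ?_⟩
    · have : Tendsto (fun ε : ℝ => c * ε) (𝓝 (0:ℝ)) (𝓝 (c * 0)) :=
        (continuous_const.mul continuous_id).tendsto 0
      simpa using this.mono_left nhdsWithin_le_nhds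
    · filter_upwards [self_mem_nhdsWithin] with x hx
      exact mul_pos hc hx
  have h2 : Tendsto (fun ε : ℝ => (c*ε)⁻¹) (𝓝[>] (0:ℝ)) atTop :=
    tendsto_inv_nhdsGT_zero.comp h1
  have h3 : Tendsto (fun ε : ℝ => -π * (c*ε)⁻¹) (𝓝[>] (0:ℝ)) atBot :=
    h2.const_mul_atTop_of_neg (neg_lt_zero.mpr Real.pi_pos)
  have h4 := Real.tendsto_exp_atBot.comp h3
  simpa using h4.const_mul tailC

lemma stepC (N r : ℕ) (hN : 0 < N) :
    Tendsto (fun ε => Df N r ε) (𝓝[>] (0:ℝ)) (𝓝 1) := by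
  have hNR : (0:ℝ) < N := Nat.cast_pos.mpr hN
  have hc : (0:ℝ) < 16*(N:ℝ)^2 := by positivity
  rw [tendsto_iff_norm_sub_tendsto_zero]
  refine squeeze_zero' (Eventually.of_forall fun _ => norm_nonneg _) ?_
    (by simpa [mul_assoc] using tendsto_aux (16*(N:ℝ)^2) hc)
  filter_upwards [Ioo_mem_nhdsGT_of_mem ⟨le_refl 0, inv_pos.mpr hc⟩] with ε hε
  have hε0 : 0 < ε := hε.1
  have hε1 : ε ≤ (16*(N:ℝ)^2)⁻¹ := hε.2.le
  have ht : (1:ℝ) ≤ (16*(N:ℝ)^2*ε)⁻¹ := by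
    rw [one_le_inv_iff₀]
    constructor
    · exact mul_pos hc hε0
    · calc 16*(N:ℝ)^2*ε ≤ 16*(N:ℝ)^2 * (16*(N:ℝ)^2)⁻¹ := by
            exact mul_le_mul_of_nonneg_left hε1 hc.le
        _ = 1 := mul_inv_cancel₀ hc.ne'
  have := tail_bound (t := (16*(N:ℝ)^2*ε)⁻¹) ht (gD_zero N r hN hε0)
    (fun n => gD_norm N r hN hε0 n)
  simpa [Df, mul_assoc] using this

lemma cexp_period {e₁ e₂ : ℂ} (K : ℤ) (h : e₁ = e₂ + (K:ℂ)*(2*(π:ℂ)*I)) :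
    cexp e₁ = cexp e₂ := by
  rw [h, Complex.exp_add, Complex.exp_int_mul_two_pi_mul_I, mul_one]

noncomputable def Aeps (N : ℕ) (ε : ℝ) : ℂ := (ε:ℂ) + (((2*(N:ℝ))⁻¹ : ℝ) : ℂ) * I

lemma Aeps_re (N : ℕ) (ε : ℝ) : (Aeps N ε).re = ε := by simp [Aeps]

lemma Aeps_ne (N : ℕ) {ε : ℝ} (hε : 0 < ε) : Aeps N ε ≠ 0 := by
  intro h
  have := Aeps_re N ε
  rw [h] at this
  simp at this
  exact hε.ne' this.symm

lemma summable_fA (N : ℕ) {ε : ℝ} (hε : 0 < ε) :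
    Summable (fun n : ℤ => cexp (-(π:ℂ) * Aeps N ε * (n:ℂ)^2)) := by
  refine Summable.of_norm_bounded (summable_gauss hε) fun n => ?_
  have hid : -(π:ℂ) * Aeps N ε * (n:ℂ)^2
      = ((-π*ε*(n:ℝ)^2 : ℝ) : ℂ) + ((-π*(2*(N:ℝ))⁻¹*(n:ℝ)^2 : ℝ) : ℂ) * I := by
    rw [Aeps]; push_cast; ring
  rw [hid, norm_cexp_re]

set_option maxHeartbeats 1000000 in
lemma stepA (N : ℕ) (hN : 0 < N) {ε : ℝ} (hε : 0 < ε) :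
    ∑' n : ℤ, cexp (-(π:ℂ) * Aeps N ε * (n:ℂ)^2)
      = ∑ r ∈ Finset.range (4*N), cexp (-(π:ℂ) * I * (r:ℂ)^2 / (2*(N:ℂ))) *
          ∑' q : ℤ, cexp (-(π:ℂ) * (ε:ℂ) * ((xval N r q : ℤ) : ℂ)^2) := by
  have hm : 0 < 4*N := by omega
  have hN' : ((N:ℕ):ℂ) ≠ 0 := Nat.cast_ne_zero.mpr hN.ne'
  set f : ℤ → ℂ := fun n => cexp (-(π:ℂ) * Aeps N ε * (n:ℂ)^2) with hf
  have hsum : Summable f := summable_fA N hε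
  rw [← (modEquiv (4*N) hm).tsum_eq f]
  have hsum2 : Summable (fun p : Fin (4*N) × ℤ => f (modEquiv (4*N) hm p)) :=
    ((modEquiv (4*N) hm).summable_iff).mpr hsum
  rw [Summable.tsum_prod' hsum2 (fun b => hsum2.prod_factor b), tsum_fintype]
  rw [← Fin.sum_univ_eq_sum_range (fun r => cexp (-(π:ℂ) * I * (r:ℂ)^2 / (2*(N:ℂ))) *
      ∑' q : ℤ, cexp (-(π:ℂ) * (ε:ℂ) * ((xval N r q : ℤ) : ℂ)^2)) (4*N)]
  refine Finset.sum_congr rfl fun b _ => ?_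
  rw [← tsum_mul_left]
  refine tsum_congr fun q => ?_
  have hx : (modEquiv (4*N) hm (b, q) : ℤ) = xval N (b : ℕ) q := by
    show (((4*N : ℕ):ℤ)) * q + ((b : ℕ) : ℤ) = xval N (b : ℕ) q
    rw [xval]; push_cast; ring
  show f (modEquiv (4*N) hm (b, q)) = _
  rw [hx, hf]
  simp only
  rw [← Complex.exp_add]
  refine cexp_period (-(4*(N:ℤ)*q^2 + 2*q*((b:ℕ):ℤ))) ?_
  rw [Aeps, xval]
  push_cast
  field_simp
  ring

noncomputable def Ceps (N : ℕ) (ε : ℝ) : ℂ := 2*(N:ℂ)*I*(ε:ℂ) / Aeps N ε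

noncomputable def Ef (N : ℕ) (ε : ℝ) : ℂ := ∑' n : ℤ, cexp (-(π:ℂ) / Ceps N ε * (n:ℂ)^2)

lemma Ceps_ne (N : ℕ) (hN : 0 < N) {ε : ℝ} (hε : 0 < ε) : Ceps N ε ≠ 0 := by
  rw [Ceps]
  apply div_ne_zero _ (Aeps_ne N hε)
  have hN' : ((N:ℕ):ℂ) ≠ 0 := Nat.cast_ne_zero.mpr hN.ne'
  have hε' : ((ε:ℝ):ℂ) ≠ 0 := Complex.ofReal_ne_zero.mpr hε.ne'
  simp [hN', hε', Complex.I_ne_zero]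

lemma Ceps_inv (N : ℕ) (hN : 0 < N) {ε : ℝ} (hε : 0 < ε) :
    (Ceps N ε)⁻¹ = (((4*(N:ℝ)^2*ε)⁻¹ : ℝ) : ℂ) + ((-(2*(N:ℝ))⁻¹ : ℝ) : ℂ) * I := by
  have hN' : ((N:ℕ):ℂ) ≠ 0 := Nat.cast_ne_zero.mpr hN.ne'
  have hε' : ((ε:ℝ):ℂ) ≠ 0 := Complex.ofReal_ne_zero.mpr hε.ne'
  rw [Ceps, inv_div, Aeps]
  rw [div_eq_iff (by simp [hN', hε', Complex.I_ne_zero] : 2*(N:ℂ)*I*(ε:ℂ) ≠ 0)]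
  push_cast
  field_simp [hN', hε']
  ring_nf
  rw [Complex.I_sq]
  ring

lemma Ceps_re (N : ℕ) (hN : 0 < N) {ε : ℝ} (hε : 0 < ε) : 0 < (Ceps N ε).re := by
  have hNR : (0:ℝ) < N := Nat.cast_pos.mpr hN
  have h := Ceps_inv N hN hε
  have hne : (Ceps N ε)⁻¹ ≠ 0 := inv_ne_zero (Ceps_ne N hN hε)
  have h2 : Ceps N ε = ((Ceps N ε)⁻¹)⁻¹ := (inv_inv _).symm
  rw [h2, Complex.inv_re]
  apply div_pos
  · rw [h]
    simp only [Complex.add_re, Complex.ofReal_re, Complex.mul_re, Complex.I_re,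
      Complex.ofReal_im, Complex.I_im]
    have : (0:ℝ) < (4*(N:ℝ)^2*ε)⁻¹ :=
      inv_pos.mpr (mul_pos (mul_pos (by norm_num) (pow_pos hNR 2)) hε)
    simpa using this
  · exact Complex.normSq_pos.mpr hne

lemma stepD (N : ℕ) (hN : 0 < N) {ε : ℝ} (hε : 0 < ε) :
    ((Real.sqrt ε : ℝ) : ℂ) * ∑' n : ℤ, cexp (-(π:ℂ) * Aeps N ε * (n:ℂ)^2)
      = (((Real.sqrt N : ℝ) : ℂ) * (1+I))⁻¹ * Ef N ε := by
  have hNR : (0:ℝ) < N := Nat.cast_pos.mpr hN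
  have hN' : ((N:ℕ):ℂ) ≠ 0 := Nat.cast_ne_zero.mpr hN.ne'
  have hε' : ((ε:ℝ):ℂ) ≠ 0 := Complex.ofReal_ne_zero.mpr hε.ne'
  have hAre : 0 < (Aeps N ε).re := by rw [Aeps_re]; exact hε
  have hCre := Ceps_re N hN hε
  have hAne := Aeps_ne N (ε := ε) hε
  have p1 := Complex.tsum_exp_neg_mul_int_sq hAre
  have p2 := Complex.tsum_exp_neg_mul_int_sq hCre
  have hmid : ∑' n : ℤ, cexp (-(π:ℂ)/Aeps N ε * (n:ℂ)^2)
      = ∑' n : ℤ, cexp (-(π:ℂ) * Ceps N ε * (n:ℂ)^2) := by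
    refine tsum_congr fun n => cexp_period ((N:ℤ)*n^2) ?_
    have hAval : Aeps N ε * (2*(N:ℂ)*I) = 2*(N:ℂ)*I*(ε:ℂ) - 1 := by
      rw [Aeps]
      push_cast
      field_simp [hN']
      ring_nf
      rw [Complex.I_sq]
      ring
    rw [Ceps]
    push_cast
    field_simp [hAne]
    linear_combination (-(n:ℂ)^2) * hAval
  have hsε : ((Real.sqrt ε : ℝ):ℂ) ≠ 0 :=
    Complex.ofReal_ne_zero.mpr (Real.sqrt_pos.mpr hε).ne'
  have hsN : ((Real.sqrt N : ℝ):ℂ) ≠ 0 :=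
    Complex.ofReal_ne_zero.mpr (Real.sqrt_pos.mpr hNR).ne'
  have h1I : (1:ℂ) + I ≠ 0 := by
    intro h
    simpa using congrArg Complex.re h
  have hAC : (Aeps N ε)^(1/2:ℂ) * (Ceps N ε)^(1/2:ℂ)
      = ((Real.sqrt N : ℝ):ℂ) * ((Real.sqrt ε : ℝ):ℂ) * (1+I) := by
    rw [← cpow_half_mul hAre hCre]
    have hac : Aeps N ε * Ceps N ε = 2*(N:ℂ)*I*(ε:ℂ) := by
      rw [Ceps]; field_simp
    rw [hac]
    refine cpow_half_eq ?_ ?_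
    · have h1 : ((1:ℂ)+I)^2 = 2*I := by linear_combination Complex.I_sq
      rw [mul_pow, mul_pow, h1, ← Complex.ofReal_pow, ← Complex.ofReal_pow,
        Real.sq_sqrt (Nat.cast_nonneg N), Real.sq_sqrt hε.le]
      push_cast
      ring
    · have ha : (0:ℝ) < Real.sqrt N * Real.sqrt ε :=
        mul_pos (Real.sqrt_pos.mpr hNR) (Real.sqrt_pos.mpr hε)
      have hre : (((Real.sqrt N : ℝ):ℂ) * ((Real.sqrt ε : ℝ):ℂ) * (1+I)).re
          = Real.sqrt N * Real.sqrt ε := by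
        simp [Complex.add_re, Complex.mul_re]
      rw [hre]
      exact ha
  have hA2 : (Aeps N ε)^(1/2:ℂ) ≠ 0 := by
    intro h
    rw [h, zero_mul] at hAC
    exact (mul_ne_zero (mul_ne_zero hsN hsε) h1I) hAC.symm
  have hC2 : (Ceps N ε)^(1/2:ℂ) ≠ 0 := by
    intro h
    rw [h, mul_zero] at hAC
    exact (mul_ne_zero (mul_ne_zero hsN hsε) h1I) hAC.symm
  have key : ((Real.sqrt ε : ℝ):ℂ) * (1/(Aeps N ε)^(1/2:ℂ) * (1/(Ceps N ε)^(1/2:ℂ)))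
      = (((Real.sqrt N : ℝ):ℂ) * (1+I))⁻¹ := by
    have hinv : (1:ℂ)/(Aeps N ε)^(1/2:ℂ) * ((1:ℂ)/(Ceps N ε)^(1/2:ℂ))
        = ((Aeps N ε)^(1/2:ℂ) * (Ceps N ε)^(1/2:ℂ))⁻¹ := by
      rw [div_mul_div_comm, one_mul, one_div]
    rw [hinv, hAC]
    field_simp
  calc ((Real.sqrt ε : ℝ):ℂ) * ∑' n : ℤ, cexp (-(π:ℂ) * Aeps N ε * (n:ℂ)^2)
      = ((Real.sqrt ε : ℝ):ℂ) * (1/(Aeps N ε)^(1/2:ℂ) *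
          ∑' n : ℤ, cexp (-(π:ℂ)/Aeps N ε * (n:ℂ)^2)) := by rw [p1]
    _ = ((Real.sqrt ε : ℝ):ℂ) * (1/(Aeps N ε)^(1/2:ℂ) * (1/(Ceps N ε)^(1/2:ℂ) * Ef N ε)) := by
        rw [hmid, p2]; rfl
    _ = (((Real.sqrt ε : ℝ):ℂ) * (1/(Aeps N ε)^(1/2:ℂ) * (1/(Ceps N ε)^(1/2:ℂ)))) * Ef N ε := by
        ring
    _ = (((Real.sqrt N : ℝ):ℂ) * (1+I))⁻¹ * Ef N ε := by rw [key]

lemma stepE (N : ℕ) (hN : 0 < N) :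
    Tendsto (fun ε => Ef N ε) (𝓝[>] (0:ℝ)) (𝓝 1) := by
  have hNR : (0:ℝ) < N := Nat.cast_pos.mpr hN
  have hc : (0:ℝ) < 4*(N:ℝ)^2 := by positivity
  rw [tendsto_iff_norm_sub_tendsto_zero]
  refine squeeze_zero' (Eventually.of_forall fun _ => norm_nonneg _) ?_
    (by simpa [mul_assoc] using tendsto_aux (4*(N:ℝ)^2) hc)
  filter_upwards [Ioo_mem_nhdsGT_of_mem ⟨le_refl 0, inv_pos.mpr hc⟩] with ε hε
  have hε0 : 0 < ε := hε.1
  have hε1 : ε ≤ (4*(N:ℝ)^2)⁻¹ := hε.2.le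
  have hexp : ∀ n : ℤ, -(π:ℂ)/Ceps N ε * (n:ℂ)^2
      = ((-π * (4*(N:ℝ)^2*ε)⁻¹ * (n:ℝ)^2 : ℝ) : ℂ)
        + ((π*(n:ℝ)^2*(2*(N:ℝ))⁻¹ : ℝ) : ℂ) * I := by
    intro n
    rw [div_eq_mul_inv, Ceps_inv N hN hε0]
    push_cast
    ring
  have ht : (1:ℝ) ≤ (4*(N:ℝ)^2*ε)⁻¹ := by
    rw [one_le_inv_iff₀]
    refine ⟨mul_pos hc hε0, ?_⟩
    calc 4*(N:ℝ)^2*ε ≤ 4*(N:ℝ)^2 * (4*(N:ℝ)^2)⁻¹ := mul_le_mul_of_nonneg_left hε1 hc.le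
      _ = 1 := mul_inv_cancel₀ hc.ne'
  have hg0 : cexp (-(π:ℂ)/Ceps N ε * ((0:ℤ):ℂ)^2) = 1 := by
    rw [hexp 0]
    norm_num
  have hgn : ∀ n : ℤ, ‖cexp (-(π:ℂ)/Ceps N ε * (n:ℂ)^2)‖
      ≤ rexp (-π * (4*(N:ℝ)^2*ε)⁻¹ * (n:ℝ)^2) := by
    intro n
    rw [hexp n, norm_cexp_re]
  have := tail_bound (t := (4*(N:ℝ)^2*ε)⁻¹) ht hg0 hgn
  simpa [Ef, mul_assoc] using this

lemma sum4 (N : ℕ) (hN : 0 < N) :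
    ∑ r ∈ Finset.range (4*N), cexp (-(π:ℂ) * I * (r:ℂ)^2 / (2*(N:ℂ)))
      = 2*(1-I)*((Real.sqrt N : ℝ) : ℂ) := by
  have hNR : (0:ℝ) < N := Nat.cast_pos.mpr hN
  set f₁ : ℝ → ℂ := fun ε => ((Real.sqrt ε : ℝ):ℂ) *
    ∑' n : ℤ, cexp (-(π:ℂ) * Aeps N ε * (n:ℂ)^2) with hf₁
  have T1 : Tendsto f₁ (𝓝[>] (0:ℝ))
      (𝓝 (∑ r ∈ Finset.range (4*N),
        cexp (-(π:ℂ) * I * (r:ℂ)^2 / (2*(N:ℂ))) * ((4*(N:ℝ) : ℝ):ℂ)⁻¹)) := by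
    have hlim : Tendsto (fun ε => ∑ r ∈ Finset.range (4*N),
        cexp (-(π:ℂ) * I * (r:ℂ)^2 / (2*(N:ℂ))) * ((4*(N:ℝ) : ℝ):ℂ)⁻¹ * Df N r ε)
        (𝓝[>] (0:ℝ))
        (𝓝 (∑ r ∈ Finset.range (4*N),
          cexp (-(π:ℂ) * I * (r:ℂ)^2 / (2*(N:ℂ))) * ((4*(N:ℝ) : ℝ):ℂ)⁻¹)) := by
      refine tendsto_finset_sum _ fun r _ => ?_
      have := (stepC N r hN).const_mul
        (cexp (-(π:ℂ) * I * (r:ℂ)^2 / (2*(N:ℂ))) * ((4*(N:ℝ) : ℝ):ℂ)⁻¹)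
      simpa using this
    refine hlim.congr' ?_
    filter_upwards [self_mem_nhdsWithin] with ε hε
    have hε0 : 0 < ε := hε
    have hsε : ((Real.sqrt ε : ℝ):ℂ) ≠ 0 :=
      Complex.ofReal_ne_zero.mpr (Real.sqrt_pos.mpr hε0).ne'
    rw [hf₁]
    simp only
    rw [stepA N hN hε0, Finset.mul_sum]
    refine Finset.sum_congr rfl fun r _ => ?_
    rw [stepB N r hN hε0]
    have h4 : ((4*(N:ℝ)*Real.sqrt ε : ℝ):ℂ) = ((4*(N:ℝ):ℝ):ℂ) * ((Real.sqrt ε : ℝ):ℂ) := by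
      push_cast; ring
    have h4N : ((4*(N:ℝ):ℝ):ℂ) ≠ 0 := by
      refine Complex.ofReal_ne_zero.mpr ?_
      positivity
    rw [h4]
    have hgen : ∀ a b c d : ℂ, b ≠ 0 → c ≠ 0 → b * (a * ((c*b)⁻¹ * d)) = a * c⁻¹ * d := by
      intro a b c d hb hc
      rw [mul_inv]
      field_simp
    exact (hgen _ _ _ _ hsε h4N).symm
  have T2 : Tendsto f₁ (𝓝[>] (0:ℝ)) (𝓝 ((((Real.sqrt N : ℝ):ℂ) * (1+I))⁻¹)) := by
    have hlim : Tendsto (fun ε => (((Real.sqrt N : ℝ):ℂ) * (1+I))⁻¹ * Ef N ε)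
        (𝓝[>] (0:ℝ)) (𝓝 ((((Real.sqrt N : ℝ):ℂ) * (1+I))⁻¹)) := by
      have := (stepE N hN).const_mul ((((Real.sqrt N : ℝ):ℂ) * (1+I))⁻¹)
      simpa using this
    refine hlim.congr' ?_
    filter_upwards [self_mem_nhdsWithin] with ε hε
    exact (stepD N hN hε).symm
  have key := tendsto_nhds_unique T1 T2
  rw [← Finset.sum_mul] at key
  have hsN : ((Real.sqrt N : ℝ):ℂ) ≠ 0 :=
    Complex.ofReal_ne_zero.mpr (Real.sqrt_pos.mpr hNR).ne'
  have h1I : (1:ℂ) + I ≠ 0 := by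
    intro h
    simpa using congrArg Complex.re h
  have h4N : ((4*(N:ℝ):ℝ):ℂ) ≠ 0 := by
    refine Complex.ofReal_ne_zero.mpr ?_
    positivity
  have hs2 : ((Real.sqrt N : ℝ):ℂ)^2 = ((N:ℕ):ℂ) := by
    rw [← Complex.ofReal_pow, Real.sq_sqrt (Nat.cast_nonneg N)]
    norm_cast
  have key2 : (∑ r ∈ Finset.range (4*N), cexp (-(π:ℂ) * I * (r:ℂ)^2 / (2*(N:ℂ))))
      = ((4*(N:ℝ):ℝ):ℂ) * (((Real.sqrt N : ℝ):ℂ)*(1+I))⁻¹ := by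
    calc (∑ r ∈ Finset.range (4*N), cexp (-(π:ℂ) * I * (r:ℂ)^2 / (2*(N:ℂ))))
        = ((∑ r ∈ Finset.range (4*N), cexp (-(π:ℂ) * I * (r:ℂ)^2 / (2*(N:ℂ)))) *
            ((4*(N:ℝ):ℝ):ℂ)⁻¹) * ((4*(N:ℝ):ℝ):ℂ) := by
          rw [mul_assoc, inv_mul_cancel₀ h4N, mul_one]
      _ = (((Real.sqrt N : ℝ):ℂ)*(1+I))⁻¹ * ((4*(N:ℝ):ℝ):ℂ) := by rw [key]
      _ = ((4*(N:ℝ):ℝ):ℂ) * (((Real.sqrt N : ℝ):ℂ)*(1+I))⁻¹ := by ring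
  rw [key2]
  have hne : ((Real.sqrt N : ℝ):ℂ)*(1+I) ≠ 0 := mul_ne_zero hsN h1I
  have hNN : ((N:ℝ):ℂ) = ((N:ℕ):ℂ) := by norm_cast
  have h4c : ((4*(N:ℝ):ℝ):ℂ) = (N:ℂ)*4 := by push_cast; ring
  field_simp
  linear_combination (2*Complex.I^2 - 2)*hs2 + (2*((N:ℝ):ℂ))*Complex.I_sq
    + (-(2+2*Complex.I^2))*hNN + h4c

lemma gauss_final (N : ℕ) (hN : 0 < N) :
    ∑ k ∈ Finset.range (2*N), cexp (-(π:ℂ) * I * (k:ℂ)^2 / (2*(N:ℂ)))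
      = (1-I) * ((Real.sqrt N : ℝ) : ℂ) := by
  have hN' : ((N:ℕ):ℂ) ≠ 0 := Nat.cast_ne_zero.mpr hN.ne'
  have h4 := sum4 N hN
  have h44 : 4*N = 2*N + 2*N := by ring
  rw [h44, Finset.range_eq_Ico,
    ← Finset.sum_Ico_consecutive _ (Nat.zero_le (2*N)) (Nat.le_add_right (2*N) (2*N)),
    ← Finset.range_eq_Ico, Finset.sum_Ico_eq_sum_range] at h4
  have hb : 2*N + 2*N - 2*N = 2*N := by omega
  rw [hb] at h4
  have hper : ∀ k : ℕ, cexp (-(π:ℂ) * I * ((2*N + k : ℕ):ℂ)^2 / (2*(N:ℂ)))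
      = cexp (-(π:ℂ) * I * (k:ℂ)^2 / (2*(N:ℂ))) := by
    intro k
    refine cexp_period (-((N:ℤ) + k)) ?_
    push_cast
    field_simp
    ring
  simp_rw [hper] at h4
  linear_combination h4 / 2


open Complex

/-- The Gauss sum `S(N) = ∑_{k=0}^{2N-1} exp(-π i k²/(2N))` equals `(1-i)√N`. -/
theorem gauss_sum_eq (N : ℕ) (hN : 0 < N) :
    ∑ k ∈ Finset.range (2 * N),
        Complex.exp (-(Real.pi : ℂ) * Complex.I * (k : ℂ) ^ 2 / (2 * (N : ℂ))) =
      (1 - Complex.I) * (Real.sqrt N : ℂ) := by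
  exact gauss_final N hN
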